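/- Let H ∈ (1/2, 3/4) and c ∈ [0, 3/2 - 2H). Then ∑_{k∈ℤ} ⟨k⟩^{-(6 - 8H - 2c)} ∫_ℝ ⟨λ⟩^{-(6-2b)} ⟨λ + k²⟩^{-(2H-1)} dλ < ∞ for every b ∈ (1/2, 1): indeed the λ-integral is bounded by C ⟨k²⟩^{-(2H-1)} plus lower-order terms, and the sum ∑_k ⟨k⟩^{-(4 - 4H - 2c)} converges since 4 - 4H - 2c > 1. -/
import Mathlib


open MeasureTheory Real ENNReal

/-- Japanese bracket `⟨x⟩ = √(1 + x²)`. -/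
noncomputable def jb (x : ℝ) : ℝ := Real.sqrt (1 + x ^ 2)

lemma jb_pos (x : ℝ) : 0 < jb x := Real.sqrt_pos.mpr (by positivity)

lemma one_le_jb (x : ℝ) : 1 ≤ jb x := by
  rw [show (1:ℝ) = Real.sqrt 1 from (Real.sqrt_one).symm]
  exact Real.sqrt_le_sqrt (by nlinarith [sq_nonneg x])

lemma jb_sq (x : ℝ) : jb x ^ 2 = 1 + x ^ 2 := Real.sq_sqrt (by positivity)

/-- Peetre: `⟨x+y⟩ ≤ √2 ⟨x⟩ ⟨y⟩`. -/
lemma jb_peetre (x y : ℝ) : jb (x + y) ≤ Real.sqrt 2 * jb x * jb y := by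
  have h : (1 + (x + y) ^ 2) ≤ 2 * ((1 + x ^ 2) * (1 + y ^ 2)) := by
    nlinarith [sq_nonneg (x - y), sq_nonneg (x*y)]
  calc jb (x + y) ≤ Real.sqrt (2 * ((1 + x ^ 2) * (1 + y ^ 2))) := Real.sqrt_le_sqrt h
    _ = Real.sqrt 2 * jb x * jb y := by
        rw [Real.sqrt_mul (by norm_num), Real.sqrt_mul (by positivity), jb, jb, mul_assoc]

/-- `⟨x⟩² ≤ √2 ⟨x²⟩`. -/
lemma jb_sq_le (x : ℝ) : jb x ^ 2 ≤ Real.sqrt 2 * jb (x ^ 2) := by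
  rw [jb_sq]
  have h : (1 + x ^ 2) ≤ Real.sqrt (2 * (1 + (x ^ 2) ^ 2)) := by
    rw [show (1:ℝ) + x ^ 2 = Real.sqrt ((1 + x^2)^2) from (Real.sqrt_sq (by positivity)).symm]
    exact Real.sqrt_le_sqrt (by nlinarith [sq_nonneg (1 - x^2)])
  calc (1 + x ^ 2) ≤ Real.sqrt (2 * (1 + (x ^ 2) ^ 2)) := h
    _ = Real.sqrt 2 * jb (x ^ 2) := by rw [Real.sqrt_mul (by norm_num), jb]

lemma jb_neg (x : ℝ) : jb (-x) = jb x := by rw [jb, jb, neg_pow]; ring_nf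

/-- Peetre consequence: `⟨l+a⟩^{-t} ≤ √2^t ⟨l⟩^t ⟨a⟩^{-t}` for `t ≥ 0`. -/
lemma jb_rpow_bound {t : ℝ} (ht : 0 ≤ t) (l a : ℝ) :
    jb (l + a) ^ (-t) ≤ (Real.sqrt 2) ^ t * jb l ^ t * jb a ^ (-t) := by
  have hpe : jb a ≤ Real.sqrt 2 * jb (l + a) * jb l := by
    have := jb_peetre (l + a) (-l)
    simpa [jb_neg] using this
  have h2 : (0:ℝ) < Real.sqrt 2 := by positivity
  have hml : (0:ℝ) < Real.sqrt 2 * jb l := mul_pos h2 (jb_pos l)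
  have hdiv : jb a / (Real.sqrt 2 * jb l) ≤ jb (l + a) := by
    rw [div_le_iff₀ hml]
    calc jb a ≤ Real.sqrt 2 * jb (l + a) * jb l := hpe
      _ = jb (l + a) * (Real.sqrt 2 * jb l) := by ring
  have h1 : jb (l + a) ^ (-t) ≤ (jb a / (Real.sqrt 2 * jb l)) ^ (-t) :=
    Real.rpow_le_rpow_of_nonpos (div_pos (jb_pos a) hml) hdiv (by linarith)
  refine h1.trans_eq ?_
  rw [Real.div_rpow (jb_pos a).le hml.le,
    Real.rpow_neg hml.le, Real.mul_rpow h2.le (jb_pos l).le,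
    div_eq_mul_inv, inv_inv, mul_comm]

/-- `⟨x²⟩^{-t} ≤ √2^t ⟨x⟩^{-2t}` for `t ≥ 0`. -/
lemma jb_sq_rpow_bound {t : ℝ} (ht : 0 ≤ t) (x : ℝ) :
    jb (x ^ 2) ^ (-t) ≤ (Real.sqrt 2) ^ t * jb x ^ (-(2*t)) := by
  have hx := jb_pos x
  have hxx := jb_pos (x ^ 2)
  have h2 : (0:ℝ) < Real.sqrt 2 := by positivity
  have hdiv : jb x ^ 2 / Real.sqrt 2 ≤ jb (x ^ 2) := by
    rw [div_le_iff₀ h2]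
    calc jb x ^ 2 ≤ Real.sqrt 2 * jb (x ^ 2) := jb_sq_le x
      _ = jb (x ^ 2) * Real.sqrt 2 := by ring
  have h1 : jb (x ^ 2) ^ (-t) ≤ (jb x ^ 2 / Real.sqrt 2) ^ (-t) :=
    Real.rpow_le_rpow_of_nonpos (div_pos (by positivity) h2) hdiv (by linarith)
  refine h1.trans_eq ?_
  have e1 : (jb x ^ 2 : ℝ) ^ (-t) = jb x ^ (-(2*t)) := by
    rw [← Real.rpow_natCast (jb x) 2, ← Real.rpow_mul hx.le]
    norm_num
  rw [Real.div_rpow (by positivity) h2.le, e1, Real.rpow_neg h2.le, div_eq_mul_inv, inv_inv, mul_comm]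

/-- `⟨l⟩^{-s} ≤ (1+l²)⁻¹` for `s ≥ 2`. -/
lemma jb_rpow_le_inv {s : ℝ} (hs : 2 ≤ s) (l : ℝ) : jb l ^ (-s) ≤ (1 + l ^ 2)⁻¹ := by
  have h1 : jb l ^ (-s) ≤ jb l ^ (-2 : ℝ) :=
    Real.rpow_le_rpow_of_exponent_le (one_le_jb l) (by linarith)
  refine h1.trans_eq ?_
  rw [Real.rpow_neg (jb_pos l).le, show ((2:ℝ)) = ((2:ℕ):ℝ) by norm_num,
    Real.rpow_natCast, jb_sq]

lemma lintegral_jb_lt_top {s : ℝ} (hs : 2 ≤ s) :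
    ∫⁻ l : ℝ, ENNReal.ofReal (jb l ^ (-s)) < ⊤ := by
  refine lt_of_le_of_lt (lintegral_mono fun l => ?_)
    (Integrable.lintegral_lt_top integrable_inv_one_add_sq)
  exact ENNReal.ofReal_le_ofReal (jb_rpow_le_inv hs l)

set_option maxHeartbeats 800000 in
lemma summable_jb_int {q : ℝ} (hq : 1 < q) : Summable (fun k : ℤ => jb k ^ (-q)) := by
  have hnat : Summable (fun n : ℕ => jb n ^ (-q)) := by
    have h2 : (0:ℝ) < Real.sqrt 2 := by positivity
    have hbase : Summable (fun n : ℕ => ((n:ℝ)) ^ (-q)) :=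
      Real.summable_nat_rpow.mpr (by linarith)
    have hshift : Summable (fun n : ℕ => ((n:ℝ) + 1) ^ (-q)) := by
      have := (summable_nat_add_iff 1).mpr hbase
      refine this.congr fun n => ?_
      push_cast
      norm_num
    have hsum : Summable (fun n : ℕ => (Real.sqrt 2) ^ q * (((n:ℝ) + 1) ^ (-q))) :=
      hshift.mul_left _
    refine Summable.of_nonneg_of_le
      (fun n => (Real.rpow_pos_of_pos (jb_pos _) _).le) (fun n => ?_) hsum
    have hn1 : (0:ℝ) < (n:ℝ) + 1 := by positivity
    have hdiv : ((n:ℝ) + 1) / Real.sqrt 2 ≤ jb n := by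
      rw [div_le_iff₀ h2, jb]
      rw [show Real.sqrt (1 + (n:ℝ) ^ 2) * Real.sqrt 2
            = Real.sqrt ((1 + (n:ℝ) ^ 2) * 2) from (Real.sqrt_mul (by positivity) 2).symm]
      rw [show ((n:ℝ) + 1) = Real.sqrt (((n:ℝ) + 1) ^ 2) from (Real.sqrt_sq hn1.le).symm]
      exact Real.sqrt_le_sqrt (by nlinarith [sq_nonneg ((n:ℝ) - 1)])
    have h1 : jb n ^ (-q) ≤ (((n:ℝ) + 1) / Real.sqrt 2) ^ (-q) :=
      Real.rpow_le_rpow_of_nonpos (div_pos hn1 h2) hdiv (by linarith)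
    refine h1.trans_eq ?_
    rw [Real.div_rpow hn1.le h2.le, Real.rpow_neg h2.le, div_eq_mul_inv, inv_inv, mul_comm]
  refine Summable.of_nat_of_neg (hnat.congr fun n => ?_) (hnat.congr fun n => ?_)
  · norm_num
  · rw [show (((-(n:ℕ) : ℤ)) : ℝ) = -(n:ℝ) by push_cast; ring, jb_neg]
/-- for `H ∈ (1/2, 3/4)`, `c ∈ [0, 3/2 - 2H)` and every `b ∈ (1/2, 1)`,
`∑_{k ∈ ℤ} ⟨k⟩^{-(6-8H-2c)} ∫_ℝ ⟨λ⟩^{-(6-2b)} ⟨λ + k²⟩^{-(2H-1)} dλ < ∞`. -/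
theorem stmt17 (H c : ℝ) (hH1 : 1/2 < H) (hH2 : H < 3/4)
    (hc0 : 0 ≤ c) (hc1 : c < 3/2 - 2 * H) :
    ∀ b : ℝ, 1/2 < b → b < 1 →
      (∑' k : ℤ, ENNReal.ofReal ((jb (k : ℝ)) ^ (-(6 - 8 * H - 2 * c)))
          * ∫⁻ l : ℝ, ENNReal.ofReal
              ((jb l) ^ (-(6 - 2 * b)) * (jb (l + (k : ℝ) ^ 2)) ^ (-(2 * H - 1)))) ≠ ⊤ := by
  intro b hb1 hb2
  have ht0 : (0:ℝ) ≤ 2 * H - 1 := by linarith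
  have hq : (1:ℝ) < 4 - 4 * H - 2 * c := by linarith
  have hst : (2:ℝ) ≤ (6 - 2 * b) - (2 * H - 1) := by linarith
  set I : ℝ≥0∞ := ∫⁻ l : ℝ, ENNReal.ofReal ((1 + l ^ 2)⁻¹) with hI
  have hIlt : I < ⊤ := Integrable.lintegral_lt_top integrable_inv_one_add_sq
  set C : ℝ≥0∞ := ENNReal.ofReal ((Real.sqrt 2) ^ (2 * (2 * H - 1))) with hC
  -- per-k bound on the inner integral
  have hint : ∀ k : ℤ,
      (∫⁻ l : ℝ, ENNReal.ofReal
          ((jb l) ^ (-(6 - 2 * b)) * (jb (l + (k : ℝ) ^ 2)) ^ (-(2 * H - 1))))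
      ≤ ENNReal.ofReal ((Real.sqrt 2) ^ (2 * H - 1) * jb ((k : ℝ) ^ 2) ^ (-(2 * H - 1))) * I := by
    intro k
    rw [hI, ← lintegral_const_mul' _ _ ENNReal.ofReal_ne_top]
    refine lintegral_mono fun l => ?_
    rw [← ENNReal.ofReal_mul (mul_nonneg (by positivity) (Real.rpow_nonneg (jb_pos _).le _))]
    apply ENNReal.ofReal_le_ofReal
    have hnn : (0:ℝ) ≤ jb l ^ (-(6 - 2 * b)) := Real.rpow_nonneg (jb_pos _).le _
    calc jb l ^ (-(6 - 2 * b)) * jb (l + (k : ℝ) ^ 2) ^ (-(2 * H - 1))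
        ≤ jb l ^ (-(6 - 2 * b)) *
            ((Real.sqrt 2) ^ (2 * H - 1) * jb l ^ (2 * H - 1) * jb ((k : ℝ) ^ 2) ^ (-(2 * H - 1))) :=
          mul_le_mul_of_nonneg_left (jb_rpow_bound ht0 l ((k : ℝ) ^ 2)) hnn
      _ = (Real.sqrt 2) ^ (2 * H - 1) * jb ((k : ℝ) ^ 2) ^ (-(2 * H - 1)) *
            (jb l ^ (-(6 - 2 * b)) * jb l ^ (2 * H - 1)) := by ring
      _ = (Real.sqrt 2) ^ (2 * H - 1) * jb ((k : ℝ) ^ 2) ^ (-(2 * H - 1)) *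
            jb l ^ (-((6 - 2 * b) - (2 * H - 1))) := by
          rw [← Real.rpow_add (jb_pos l)]; ring_nf
      _ ≤ (Real.sqrt 2) ^ (2 * H - 1) * jb ((k : ℝ) ^ 2) ^ (-(2 * H - 1)) * (1 + l ^ 2)⁻¹ := by
          refine mul_le_mul_of_nonneg_left (jb_rpow_le_inv hst l) ?_
          exact mul_nonneg (by positivity) (Real.rpow_nonneg (jb_pos _).le _)
  -- per-k bound on the coefficient
  have hcoef : ∀ k : ℤ,
      ENNReal.ofReal ((jb (k : ℝ)) ^ (-(6 - 8 * H - 2 * c))) *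
        ENNReal.ofReal ((Real.sqrt 2) ^ (2 * H - 1) * jb ((k : ℝ) ^ 2) ^ (-(2 * H - 1)))
      ≤ C * ENNReal.ofReal ((jb (k : ℝ)) ^ (-(4 - 4 * H - 2 * c))) := by
    intro k
    rw [← ENNReal.ofReal_mul (Real.rpow_nonneg (jb_pos _).le _), hC,
      ← ENNReal.ofReal_mul (by positivity)]
    apply ENNReal.ofReal_le_ofReal
    have h1 : jb ((k : ℝ) ^ 2) ^ (-(2 * H - 1))
        ≤ (Real.sqrt 2) ^ (2 * H - 1) * jb (k : ℝ) ^ (-(2 * (2 * H - 1))) :=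
      jb_sq_rpow_bound ht0 (k : ℝ)
    have hnn : (0:ℝ) ≤ jb (k : ℝ) ^ (-(6 - 8 * H - 2 * c)) * (Real.sqrt 2) ^ (2 * H - 1) :=
      mul_nonneg (Real.rpow_nonneg (jb_pos _).le _) (by positivity)
    calc jb (k : ℝ) ^ (-(6 - 8 * H - 2 * c)) *
          ((Real.sqrt 2) ^ (2 * H - 1) * jb ((k : ℝ) ^ 2) ^ (-(2 * H - 1)))
        ≤ jb (k : ℝ) ^ (-(6 - 8 * H - 2 * c)) * ((Real.sqrt 2) ^ (2 * H - 1) *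
            ((Real.sqrt 2) ^ (2 * H - 1) * jb (k : ℝ) ^ (-(2 * (2 * H - 1))))) := by
          rw [← mul_assoc, ← mul_assoc]
          exact mul_le_mul_of_nonneg_left h1 hnn
      _ = (Real.sqrt 2) ^ (2 * H - 1) * (Real.sqrt 2) ^ (2 * H - 1) *
            (jb (k : ℝ) ^ (-(6 - 8 * H - 2 * c)) * jb (k : ℝ) ^ (-(2 * (2 * H - 1)))) := by ring
      _ = (Real.sqrt 2) ^ (2 * (2 * H - 1)) * jb (k : ℝ) ^ (-(4 - 4 * H - 2 * c)) := by
          rw [← Real.rpow_add (jb_pos _), ← Real.rpow_add (by positivity : (0:ℝ) < Real.sqrt 2)]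
          ring_nf
  -- assemble
  have hterm : ∀ k : ℤ,
      ENNReal.ofReal ((jb (k : ℝ)) ^ (-(6 - 8 * H - 2 * c)))
        * ∫⁻ l : ℝ, ENNReal.ofReal
            ((jb l) ^ (-(6 - 2 * b)) * (jb (l + (k : ℝ) ^ 2)) ^ (-(2 * H - 1)))
      ≤ (C * I) * ENNReal.ofReal ((jb (k : ℝ)) ^ (-(4 - 4 * H - 2 * c))) := by
    intro k
    calc ENNReal.ofReal ((jb (k : ℝ)) ^ (-(6 - 8 * H - 2 * c)))
          * ∫⁻ l : ℝ, ENNReal.ofReal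
              ((jb l) ^ (-(6 - 2 * b)) * (jb (l + (k : ℝ) ^ 2)) ^ (-(2 * H - 1)))
        ≤ ENNReal.ofReal ((jb (k : ℝ)) ^ (-(6 - 8 * H - 2 * c))) *
            (ENNReal.ofReal ((Real.sqrt 2) ^ (2 * H - 1) * jb ((k : ℝ) ^ 2) ^ (-(2 * H - 1))) * I) :=
          mul_le_mul_right (hint k) _
      _ = (ENNReal.ofReal ((jb (k : ℝ)) ^ (-(6 - 8 * H - 2 * c))) *
            ENNReal.ofReal ((Real.sqrt 2) ^ (2 * H - 1) * jb ((k : ℝ) ^ 2) ^ (-(2 * H - 1)))) * I := by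
          rw [mul_assoc]
      _ ≤ (C * ENNReal.ofReal ((jb (k : ℝ)) ^ (-(4 - 4 * H - 2 * c)))) * I :=
          mul_le_mul_left (hcoef k) I
      _ = (C * I) * ENNReal.ofReal ((jb (k : ℝ)) ^ (-(4 - 4 * H - 2 * c))) := by
          rw [mul_right_comm]
  have hsum : (∑' k : ℤ, ENNReal.ofReal ((jb (k : ℝ)) ^ (-(4 - 4 * H - 2 * c)))) ≠ ⊤ := by
    rw [← ENNReal.ofReal_tsum_of_nonneg (fun k => Real.rpow_nonneg (jb_pos _).le _)
      (summable_jb_int hq)]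
    exact ENNReal.ofReal_ne_top
  refine ne_top_of_le_ne_top ?_ (ENNReal.tsum_le_tsum hterm)
  rw [ENNReal.tsum_mul_left]
  exact ENNReal.mul_ne_top (ENNReal.mul_ne_top ENNReal.ofReal_ne_top hIlt.ne) hsum
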